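/- Let S be an associative ring and a₁, a₂, k₁, k₂, L, m, q₁, q₂, r₁, r₂ ∈ S satisfy m − γa₁ = q₁k₁ + r₁ and m − a₂γ = k₂q₂ + r₂, where γ = k₁Lk₂, ε₁ = k₁La₂, ε₂ = a₁Lk₂, and P = a₁La₂. Then (m − r₁)·L·(m − r₂) = q₁γq₂ + q₁ε₁γ + γε₂q₂ + γPγ (correctness of the ElGamal-like signature verification). -/
import Mathlib

/-- Correctness of the ElGamal-like signature verification:
with `γ = k₁Lk₂`, `ε₁ = k₁La₂`, `ε₂ = a₁Lk₂`, `P = a₁La₂`,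
`m − γa₁ = q₁k₁ + r₁` and `m − a₂γ = k₂q₂ + r₂`, we get
`(m − r₁)L(m − r₂) = q₁γq₂ + q₁ε₁γ + γε₂q₂ + γPγ`. -/
theorem elgamal_signature_verification {S : Type*} [Ring S]
    (a₁ a₂ k₁ k₂ L m q₁ q₂ r₁ r₂ γ ε₁ ε₂ P : S)
    (hγ : γ = k₁ * L * k₂) (hε₁ : ε₁ = k₁ * L * a₂) (hε₂ : ε₂ = a₁ * L * k₂)
    (hP : P = a₁ * L * a₂)
    (h₁ : m - γ * a₁ = q₁ * k₁ + r₁) (h₂ : m - a₂ * γ = k₂ * q₂ + r₂) :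
    (m - r₁) * L * (m - r₂) = q₁ * γ * q₂ + q₁ * ε₁ * γ + γ * ε₂ * q₂ + γ * P * γ := by
  have e₁ : m - r₁ = q₁ * k₁ + γ * a₁ := by rw [sub_eq_iff_eq_add] at h₁ ⊢; rw [h₁]; abel
  have e₂ : m - r₂ = k₂ * q₂ + a₂ * γ := by rw [sub_eq_iff_eq_add] at h₂ ⊢; rw [h₂]; abel
  rw [e₁, e₂, hγ, hε₁, hε₂, hP]
  noncomm_ring
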